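/- Let A be a finite-dimensional real vector space equipped with a bilinear, commutative, associative multiplication · possessing a two-sided identity element e (e·x = x for all x), and let B be a nondegenerate symmetric bilinear form on A satisfying the invariance condition B(x·y, z) = B(y, x·z) for all x, y, z. Suppose N ⊆ A is a subspace such that A is the (internal) direct sum of the line ℝ·e and N. Then the subspace Z = { x ∈ A : n·x = 0 for all n ∈ N } has dimension at most one. -/

import Mathlib

/-- The subspace `Z = { x : A | n·x = 0 for all n ∈ N }` of elements annihilated by a
subspace `N` under a bilinear multiplication. -/
def annihilatedBy {A : Type*} [AddCommGroup A] [Module ℝ A]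
    (mul : A →ₗ[ℝ] A →ₗ[ℝ] A) (N : Submodule ℝ A) : Submodule ℝ A where
  carrier := { x : A | ∀ n ∈ N, mul n x = 0 }
  add_mem' := by
    intro a b ha hb n hn
    simp [map_add, ha n hn, hb n hn]
  zero_mem' := by
    intro n hn
    simp
  smul_mem' := by
    intro c a ha n hn
    simp [ha n hn]

/-! The linear functional `x ↦ B(x, e)` is injective on `Z`: if `x ∈ Z` and `B(x, e) = 0`, then
for `n ∈ N` invariance gives `B(x, n) = B(x, n·e) = B(n·x, e) = 0`, so `B(x, -)` vanishes on
`ℝ·e + N = A` and `x = 0` by nondegeneracy. Hence `Z` embeds into `ℝ`. -/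

theorem Submodule.finrank_le_one_of_disjoint_ker {K V : Type*} [Field K] [AddCommGroup V]
    [Module K V] (f : V →ₗ[K] K) {Z : Submodule K V} (hZ : Disjoint Z (LinearMap.ker f)) :
    Module.finrank K Z ≤ 1 :=
  (LinearMap.finrank_le_finrank_of_injective
    (LinearMap.injective_domRestrict_iff.mpr hZ)).trans (Module.finrank_self K).le

section

variable {A : Type*} [AddCommGroup A] [Module ℝ A] (mul : A →ₗ[ℝ] A →ₗ[ℝ] A)
  (B : A →ₗ[ℝ] A →ₗ[ℝ] ℝ) {e : A} {N : Submodule ℝ A}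

theorem apply_eq_zero_of_mem_annihilatedBy
    (hBinv : ∀ x y z : A, B (mul x y) z = B y (mul x z)) (he : ∀ n ∈ N, mul n e = n)
    {x n : A} (hx : x ∈ annihilatedBy mul N) (hn : n ∈ N) : B x n = 0 :=
  calc B x n = B x (mul n e) := by rw [he n hn]
    _ = B (mul n x) e := (hBinv n x e).symm
    _ = 0 := by rw [hx n hn, map_zero, LinearMap.zero_apply]

theorem disjoint_annihilatedBy_ker_flip
    (hBinv : ∀ x y z : A, B (mul x y) z = B y (mul x z)) (he : ∀ n ∈ N, mul n e = n)
    (hB : B.SeparatingLeft) (hcod : Codisjoint (Submodule.span ℝ {e}) N) :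
    Disjoint (annihilatedBy mul N) (LinearMap.ker (B.flip e)) := by
  refine Submodule.disjoint_def.mpr fun x hxZ hxe => hB x fun y => ?_
  have hspan : Submodule.span ℝ {e} ≤ LinearMap.ker (B x) :=
    (Submodule.span_singleton_le_iff_mem _ _).mpr hxe
  have hN : N ≤ LinearMap.ker (B x) := fun n hn =>
    apply_eq_zero_of_mem_annihilatedBy mul B hBinv he hxZ hn
  exact hcod.top_le.trans (sup_le hspan hN) Submodule.mem_top

end

theorem most_nilpotent_subspace_dim_le_one_general
    {A : Type*} [AddCommGroup A] [Module ℝ A]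
    (mul : A →ₗ[ℝ] A →ₗ[ℝ] A)
    (hcomm : ∀ x y : A, mul x y = mul y x)
    (e : A) (hid : ∀ x : A, mul e x = x)
    (B : A →ₗ[ℝ] A →ₗ[ℝ] ℝ)
    (hBinv : ∀ x y z : A, B (mul x y) z = B y (mul x z))
    (hBnondeg : ∀ x : A, (∀ y : A, B x y = 0) → x = 0)
    (N : Submodule ℝ A)
    (hds : IsCompl (Submodule.span ℝ {e}) N) :
    Module.finrank ℝ (annihilatedBy mul N) ≤ 1 :=
  Submodule.finrank_le_one_of_disjoint_ker (B.flip e) <|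
    disjoint_annihilatedBy_ker_flip mul B hBinv (fun n _ => (hcomm n e).trans (hid n)) hBnondeg
      hds.codisjoint

/-- Let `A` be a finite-dimensional real commutative associative
algebra with identity `e`, endowed with a nondegenerate symmetric invariant bilinear
form `B`, and let `N` be a subspace with `A = ℝ·e ⊕ N`.  Then the "most nilpotent
subspace" `Z = { x | n·x = 0 for all n ∈ N }` has dimension at most one. -/
theorem most_nilpotent_subspace_dim_le_one
    {A : Type*} [AddCommGroup A] [Module ℝ A] [FiniteDimensional ℝ A]
    (mul : A →ₗ[ℝ] A →ₗ[ℝ] A)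
    (hcomm : ∀ x y : A, mul x y = mul y x)
    (hassoc : ∀ x y z : A, mul x (mul y z) = mul (mul x y) z)
    (e : A) (hid : ∀ x : A, mul e x = x)
    (B : A →ₗ[ℝ] A →ₗ[ℝ] ℝ)
    (hBsymm : ∀ x y : A, B x y = B y x)
    (hBinv : ∀ x y z : A, B (mul x y) z = B y (mul x z))
    (hBnondeg : ∀ x : A, (∀ y : A, B x y = 0) → x = 0)
    (N : Submodule ℝ A)
    (hds : IsCompl (Submodule.span ℝ {e}) N) :
    Module.finrank ℝ (annihilatedBy mul N) ≤ 1 :=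
  most_nilpotent_subspace_dim_le_one_general mul hcomm e hid B hBinv hBnondeg N hds
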